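/- Let k ≥ 2 be an integer and let b_1, …, b_k be integers with b_i ≥ 2 for all i, and let A_loop be the associated loop matrix over ℚ. Then for every i and j (indices taken cyclically in {1,…,k}, so that i+1 means 1 when i = k): (A_loop^{-1})_{i+1, j} = −b_i·(A_loop^{-1})_{i,j} if j ≠ i, and (A_loop^{-1})_{i+1, i} = −b_i·(A_loop^{-1})_{i,i} + 1. In particular, each row of A_loop^{-1} is −b_i times the previous row modulo ℤ. -/

import Mathlib

/-!
Row `i` of the loop matrix `A` has `b i` on the diagonal and a single off-diagonal `1`, in
column `i + 1`, so `(A * N) i j = b i * N i j + N (i + 1) j` for every matrix `N`. Taking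
`N = A⁻¹` gives the recursion. `A⁻¹` is a true inverse because `|b i| ≥ 2 > 1` makes `A`
strictly diagonally dominant.
-/

/-- The loop matrix of exponents `b : Fin k → ℚ`: entries `b i` on the diagonal,
`1` in positions `(i, i+1)` for `i = 0, …, k-2` and in position `(k-1, 0)`,
and `0` elsewhere. -/
def loopMatrix {k : ℕ} (b : Fin k → ℚ) : Matrix (Fin k) (Fin k) ℚ :=
  Matrix.of fun i j =>
    if i = j then b i
    else if j.val = i.val + 1 ∨ (i.val = k - 1 ∧ j.val = 0) then 1 else 0

namespace Fin

theorem eq_add_one_iff_val {k : ℕ} [NeZero k] (i j : Fin k) :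
    j = i + 1 ↔ j.val = i.val + 1 ∨ (i.val = k - 1 ∧ j.val = 0) := by
  obtain ⟨n, rfl⟩ : ∃ n, k = n + 1 := ⟨k - 1, by have := NeZero.pos k; omega⟩
  have := i.isLt
  simp only [Fin.ext_iff, Fin.val_add_one, Fin.val_last]
  split_ifs <;> omega

theorem add_one_ne_self {k : ℕ} [NeZero k] (hk : 2 ≤ k) (i : Fin k) : i + 1 ≠ i := fun h => by
  have := (eq_add_one_iff_val i i).1 h.symm
  omega

end Fin

section LoopMatrix

variable {k : ℕ} [NeZero k]

theorem loopMatrix_apply (hk : 2 ≤ k) (b : Fin k → ℚ) (i j : Fin k) :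
    loopMatrix b i j = (if i = j then b i else 0) + if j = i + 1 then 1 else 0 := by
  rcases eq_or_ne i j with rfl | hij
  · simp [loopMatrix, (Fin.add_one_ne_self hk i).symm]
  · simp [loopMatrix, hij, Fin.eq_add_one_iff_val]

theorem loopMatrix_mul_apply (hk : 2 ≤ k) (b : Fin k → ℚ) (N : Matrix (Fin k) (Fin k) ℚ)
    (i j : Fin k) : (loopMatrix b * N) i j = b i * N i j + N (i + 1) j := by
  simp [Matrix.mul_apply, loopMatrix_apply hk, add_mul, ite_mul, Finset.sum_add_distrib]

theorem sum_norm_loopMatrix_offDiag (hk : 2 ≤ k) (b : Fin k → ℚ) (i : Fin k) :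
    ∑ j ∈ Finset.univ.erase i, ‖loopMatrix b i j‖ = 1 := by
  rw [Finset.sum_eq_single_of_mem (i + 1) (by simp [Fin.add_one_ne_self hk])]
  · simp [loopMatrix_apply hk, (Fin.add_one_ne_self hk i).symm]
  · intro j hj hji
    simp [loopMatrix_apply hk, hji, (Finset.ne_of_mem_erase hj).symm]

theorem det_loopMatrix_ne_zero (hk : 2 ≤ k) (b : Fin k → ℚ) (hb : ∀ i, 1 < |b i|) :
    (loopMatrix b).det ≠ 0 :=
  det_ne_zero_of_sum_row_lt_diag fun i => by
    rw [sum_norm_loopMatrix_offDiag hk, loopMatrix_apply hk]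
    simp only [(Fin.add_one_ne_self hk i).symm, if_true, if_false, add_zero,
      ← Rat.norm_cast_real, Real.norm_eq_abs]
    exact_mod_cast hb i

end LoopMatrix

/-- Each row of the inverse of the loop matrix is `-b i` times the previous row, except
in the diagonal spot: with indices taken cyclically (Fin k addition),
`(A⁻¹) (i+1) j = -b i * (A⁻¹) i j` for `j ≠ i`, and
`(A⁻¹) (i+1) i = -b i * (A⁻¹) i i + 1`. -/
theorem loopMatrix_inv_row_recursion {k : ℕ} [NeZero k] (hk : 2 ≤ k) (b : Fin k → ℤ)
    (hb : ∀ i, 2 ≤ b i) :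
    ∀ i j : Fin k,
      (j ≠ i →
        (loopMatrix fun l => (b l : ℚ))⁻¹ (i + 1) j =
          -(b i : ℚ) * (loopMatrix fun l => (b l : ℚ))⁻¹ i j) ∧
      (loopMatrix fun l => (b l : ℚ))⁻¹ (i + 1) i =
        -(b i : ℚ) * (loopMatrix fun l => (b l : ℚ))⁻¹ i i + 1 := by
  intro i j
  set A := loopMatrix fun l => (b l : ℚ)
  have hb_abs (l : Fin k) : 1 < |(b l : ℚ)| :=
    lt_abs.2 (Or.inl (by exact_mod_cast hb l))
  have hdet : IsUnit A.det := (det_loopMatrix_ne_zero hk _ hb_abs).isUnit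
  have hrow (c : Fin k) :
      (b i : ℚ) * A⁻¹ i c + A⁻¹ (i + 1) c = (1 : Matrix (Fin k) (Fin k) ℚ) i c := by
    rw [← Matrix.mul_nonsing_inv _ hdet, loopMatrix_mul_apply hk]
  refine ⟨fun hji => ?_, ?_⟩
  · linarith [hrow j, Matrix.one_apply_ne (α := ℚ) hji.symm]
  · linarith [hrow i, Matrix.one_apply_eq (α := ℚ) i]
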